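/- Let σ : I¹ → I be a linear system. For x ∈ J_σ and k ≥ 1, let I^k(x) denote the connected component of I^k containing x. Then ⋂_{k≥1} I^k(x) = {x}. Consequently, distinct points of J_σ have distinct itineraries: if x, y ∈ J_σ with x ≠ y, then there exists k ≥ 0 such that σ^k(x) and σ^k(y) lie in different components I¹_j of I¹. -/

import Mathlib

noncomputable section

/-- Iterated preimages `I^k` for a map `σ` with domain pieces `I1 ⊆ I`:
`I⁰ = I`, `I^{k+1} = {x ∈ I¹ : σ x ∈ I^k}`. -/
def levIter (σ : ℝ → ℝ) (I1 I : Set ℝ) : ℕ → Set ℝ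
  | 0 => I
  | k + 1 => {x | x ∈ I1 ∧ σ x ∈ levIter σ I1 I k}

/-- A linear system `σ : I¹ → I` on finite collections of pairwise disjoint
bounded open intervals `I = I₁ ∪ ⋯ ∪ Iₙ` and `I¹ = I¹₁ ∪ ⋯ ∪ I¹ₘ`. -/
structure LinearSystem (n m : ℕ) where
  /-- the intervals of the range -/
  I : Fin n → Set ℝ
  /-- the intervals of the domain -/
  I1 : Fin m → Set ℝ
  /-- the map (extended arbitrarily outside `I¹`) -/
  σ : ℝ → ℝ
  hI : ∀ i, ∃ a b : ℝ, a < b ∧ I i = Set.Ioo a b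
  hI1 : ∀ j, ∃ a b : ℝ, a < b ∧ I1 j = Set.Ioo a b
  hdisj : Pairwise fun i i' => Disjoint (I i) (I i')
  hdisj1 : Pairwise fun j j' => Disjoint (I1 j) (I1 j')
  /-- each `I¹ⱼ` is contained in some `Iᵢ` -/
  hsub : ∀ j, ∃ i, I1 j ⊆ I i
  /-- `σ` restricted to each `I¹ⱼ` is an affine bijection onto some `Iᵢ` -/
  haff : ∀ j, ∃ i, ∃ a b : ℝ, a ≠ 0 ∧ (∀ x ∈ I1 j, σ x = a * x + b) ∧
    σ '' I1 j = I i
  /-- exactness: each endpoint of each `Iᵢ` is an endpoint of a component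
  `I¹ⱼ ⊆ Iᵢ` -/
  hexact : ∀ i, (∃ j, I1 j ⊆ I i ∧ sInf (I1 j) = sInf (I i)) ∧
    (∃ j, I1 j ⊆ I i ∧ sSup (I1 j) = sSup (I i))
  /-- mixing: some `I^N` meets every `Iᵢ` in a nonempty disconnected set -/
  hmix : ∃ N : ℕ, 1 ≤ N ∧ ∀ i,
    ((levIter σ (⋃ j, I1 j) (⋃ i, I i) N) ∩ I i).Nonempty ∧
    ¬ IsPreconnected ((levIter σ (⋃ j, I1 j) (⋃ i, I i) N) ∩ I i)

/-- The set `I^k` of a linear system. -/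
def LinearSystem.lev {n m : ℕ} (L : LinearSystem n m) : ℕ → Set ℝ :=
  levIter L.σ (⋃ j, L.I1 j) (⋃ i, L.I i)

/-- The Julia set `J_σ = ⋂_{k ≥ 1} I^k` of a linear system. -/
def LinearSystem.julia {n m : ℕ} (L : LinearSystem n m) : Set ℝ :=
  ⋂ k : ℕ, L.lev (k + 1)

end

/-
Write `I^k(x)` for the component of `I^k` containing `x`. A branch of `σ` maps `I^{k+1}(x)`
affinely onto `I^k(σ x)`, so `σ^k` maps `I^k(x)` affinely onto the interval `I_i` containing
`σ^k x`, and `I^{k+N}(x)` onto `I^N(σ^k x)`. Mixing provides in each `I_i` a point outside `I^N`,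
so every component of `I^N` inside `I_i` has length at most `Λ |I_i|` for a uniform `Λ < 1`;
pulling back by the affine map gives `|I^{k+N}(x)| ≤ Λ |I^k(x)|`, and the components shrink to
`x`. If `x` and `y` have the same itinerary, induction on `k`, pulling back along the injective
branch of `σ`, puts `y` in every `I^k(x)`, hence `y = x`.
-/

open Set Metric Bornology Filter Topology Pointwise

theorem connectedComponentIn_iUnion_of_isOpen {X ι : Type*} [TopologicalSpace X]
    {U : ι → Set X} (hopen : ∀ i, IsOpen (U i)) (hconn : ∀ i, IsPreconnected (U i))
    (hdisj : Pairwise fun i j => Disjoint (U i) (U j)) {i : ι} {x : X} (hx : x ∈ U i) :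
    connectedComponentIn (⋃ i, U i) x = U i := by
  refine subset_antisymm ?_ ((hconn i).subset_connectedComponentIn hx (subset_iUnion U i))
  refine isPreconnected_connectedComponentIn.subset_left_of_subset_union (hopen i)
    (isOpen_biUnion (s := {i}ᶜ) fun j _ => hopen j) ?_ ?_ ⟨x, mem_connectedComponentIn ?_, hx⟩
  · exact disjoint_iUnion₂_right.2 fun j hj => hdisj (Ne.symm hj)
  · intro y hy
    obtain ⟨j, hj⟩ := mem_iUnion.1 (connectedComponentIn_subset _ _ hy)
    by_cases hji : j = i
    · exact Or.inl (hji ▸ hj)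
    · exact Or.inr (mem_biUnion hji hj)
  · exact mem_iUnion_of_mem i hx

theorem image_connectedComponentIn_eq_of_rightInvOn {X Y : Type*} [TopologicalSpace X]
    [TopologicalSpace Y] {f : X → Y} {g : Y → X} (hf : Continuous f) (hg : Continuous g)
    {S : Set X} {T : Set Y} {x : X} (hx : x ∈ S)
    (hfS : MapsTo f (connectedComponentIn S x) T)
    (hgT : MapsTo g (connectedComponentIn T (f x)) S) (hgf : g (f x) = x)
    (hfg : RightInvOn g f (connectedComponentIn T (f x))) :
    f '' connectedComponentIn S x = connectedComponentIn T (f x) := by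
  have hxC := mem_connectedComponentIn hx
  refine subset_antisymm ((isPreconnected_connectedComponentIn.image f hf.continuousOn)
    |>.subset_connectedComponentIn (mem_image_of_mem f hxC) hfS.image_subset) fun y hy => ?_
  have hgD : g '' connectedComponentIn T (f x) ⊆ connectedComponentIn S x :=
    (isPreconnected_connectedComponentIn.image g hg.continuousOn).subset_connectedComponentIn
      ⟨f x, mem_connectedComponentIn (hfS hxC), hgf⟩ hgT.image_subset
  exact ⟨g y, hgD (mem_image_of_mem g hy), hfg hy⟩

theorem diam_image_mul_add (a b : ℝ) (s : Set ℝ) :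
    diam ((fun y => a * y + b) '' s) = |a| * diam s := by
  have : (fun y => a * y + b) '' s = b +ᵥ a • s := by
    rw [← image_smul, ← image_vadd, image_image]
    simp only [vadd_eq_add, smul_eq_mul, add_comm]
  rw [this, diam_vadd, diam_smul₀, Real.norm_eq_abs]

theorem IsPreconnected.diam_le_max_of_notMem {s : Set ℝ} {A B w : ℝ} (hs : IsPreconnected s)
    (hsAB : s ⊆ Ioo A B) (hw : w ∈ Ioo A B) (hws : w ∉ s) :
    diam s ≤ max (w - A) (B - w) := by
  rcases hs.subset_or_subset isOpen_Iio isOpen_Ioi (disjoint_left.2 fun _ h₁ h₂ => lt_asymm h₁ h₂)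
    (fun y hy => (ne_of_mem_of_not_mem hy hws).lt_or_gt) with h | h
  · calc diam s ≤ diam (Icc A w) :=
          diam_mono (fun y hy => ⟨(hsAB hy).1.le, (h hy).le⟩) (isBounded_Icc _ _)
      _ = w - A := Real.diam_Icc hw.1.le
      _ ≤ _ := le_max_left _ _
  · calc diam s ≤ diam (Icc w B) :=
          diam_mono (fun y hy => ⟨(h hy).le, (hsAB hy).2.le⟩) (isBounded_Icc _ _)
      _ = B - w := Real.diam_Icc hw.2.le
      _ ≤ _ := le_max_right _ _

theorem exists_forall_le_of_forall_lt_one {ι : Type*} [Finite ι] {r : ι → ℝ}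
    (hr : ∀ i, r i < 1) : ∃ Λ, 0 ≤ Λ ∧ Λ < 1 ∧ ∀ i, r i ≤ Λ := by
  rcases isEmpty_or_nonempty ι with _ | _
  · exact ⟨0, le_rfl, one_pos, isEmptyElim⟩
  · obtain ⟨i, hi⟩ := Finite.exists_max r
    exact ⟨max (r i) 0, le_max_right _ _, max_lt (hr i) one_pos,
      fun j => (hi j).trans (le_max_left _ _)⟩

def IsAffineBijOn (f : ℝ → ℝ) (s t : Set ℝ) : Prop :=
  ∃ a b : ℝ, a ≠ 0 ∧ (∀ x ∈ s, f x = a * x + b) ∧ f '' s = t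

theorem isAffineBijOn_id (s : Set ℝ) : IsAffineBijOn id s s :=
  ⟨1, 0, one_ne_zero, fun x _ => by simp, image_id s⟩

namespace IsAffineBijOn

variable {f g : ℝ → ℝ} {s t u : Set ℝ}

theorem comp (hf : IsAffineBijOn f s t) (hg : IsAffineBijOn g t u) :
    IsAffineBijOn (g ∘ f) s u := by
  obtain ⟨a, b, ha, hfs, rfl⟩ := hf
  obtain ⟨c, d, hc, hgt, rfl⟩ := hg
  refine ⟨c * a, c * b + d, mul_ne_zero hc ha, fun x hx => ?_, image_comp g f s⟩
  rw [Function.comp_apply, hgt _ (mem_image_of_mem f hx), hfs x hx]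
  ring

theorem image_eq (hf : IsAffineBijOn f s t) : f '' s = t := by
  obtain ⟨-, -, -, -, h⟩ := hf
  exact h

theorem injOn (hf : IsAffineBijOn f s t) : InjOn f s := by
  obtain ⟨a, b, ha, hfs, -⟩ := hf
  intro x hx y hy hxy
  rw [hfs x hx, hfs y hy] at hxy
  exact mul_left_cancel₀ ha (add_right_cancel hxy)

theorem exists_diam_image_eq (hf : IsAffineBijOn f s t) :
    ∃ c > 0, ∀ s' ⊆ s, diam (f '' s') = c * diam s' := by
  obtain ⟨a, b, ha, hfs, -⟩ := hf
  refine ⟨|a|, abs_pos.2 ha, fun s' hs' => ?_⟩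
  rw [image_congr fun x hx => hfs x (hs' hx), diam_image_mul_add]

end IsAffineBijOn

namespace LinearSystem

variable {n m : ℕ} (L : LinearSystem n m)

theorem isOpen_I (i : Fin n) : IsOpen (L.I i) := by
  obtain ⟨a, b, -, h⟩ := L.hI i
  exact h ▸ isOpen_Ioo

theorem isPreconnected_I (i : Fin n) : IsPreconnected (L.I i) := by
  obtain ⟨a, b, -, h⟩ := L.hI i
  exact h ▸ isPreconnected_Ioo

theorem isOpen_I1 (j : Fin m) : IsOpen (L.I1 j) := by
  obtain ⟨a, b, -, h⟩ := L.hI1 j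
  exact h ▸ isOpen_Ioo

theorem isPreconnected_I1 (j : Fin m) : IsPreconnected (L.I1 j) := by
  obtain ⟨a, b, -, h⟩ := L.hI1 j
  exact h ▸ isPreconnected_Ioo

theorem isAffineBijOn_I1 (j : Fin m) : ∃ i, IsAffineBijOn L.σ (L.I1 j) (L.I i) :=
  L.haff j

theorem lev_succ_subset_lev (k : ℕ) : L.lev (k + 1) ⊆ L.lev k := by
  induction k with
  | zero =>
    intro x hx
    obtain ⟨j, hj⟩ := mem_iUnion.1 hx.1
    obtain ⟨i, hi⟩ := L.hsub j
    exact mem_iUnion_of_mem i (hi hj)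
  | succ k ih => exact fun x hx => ⟨hx.1, ih hx.2⟩

theorem antitone_lev : Antitone L.lev :=
  antitone_nat_of_succ_le L.lev_succ_subset_lev

theorem isBounded_lev (k : ℕ) : IsBounded (L.lev k) := by
  refine (isBounded_iUnion.2 fun i => ?_).subset (L.antitone_lev k.zero_le)
  obtain ⟨a, b, -, h⟩ := L.hI i
  exact h ▸ isBounded_Ioo a b

theorem mem_lev_of_mem_julia {x : ℝ} (hx : x ∈ L.julia) (k : ℕ) : x ∈ L.lev k :=
  L.antitone_lev k.le_succ (mem_iInter.1 hx k)

theorem σ_mem_julia {x : ℝ} (hx : x ∈ L.julia) : L.σ x ∈ L.julia :=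
  mem_iInter.2 fun k => (mem_iInter.1 hx (k + 1)).2

theorem iterate_mem_lev {k t : ℕ} {x : ℝ} (hx : x ∈ L.lev (k + t)) : L.σ^[k] x ∈ L.lev t := by
  induction k generalizing x with
  | zero => simpa using hx
  | succ k ih =>
    rw [Nat.add_right_comm] at hx
    exact ih hx.2

theorem connectedComponentIn_lev_zero {z : ℝ} {i : Fin n} (hz : z ∈ L.I i) :
    connectedComponentIn (L.lev 0) z = L.I i :=
  connectedComponentIn_iUnion_of_isOpen L.isOpen_I L.isPreconnected_I L.hdisj hz

theorem connectedComponentIn_lev_subset_I {z : ℝ} {i : Fin n} (hz : z ∈ L.I i) (k : ℕ) :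
    connectedComponentIn (L.lev k) z ⊆ L.I i :=
  (connectedComponentIn_mono z (L.antitone_lev k.zero_le)).trans
    (L.connectedComponentIn_lev_zero hz).subset

theorem connectedComponentIn_lev_succ_subset_I1 {z : ℝ} {j : Fin m} (hz : z ∈ L.I1 j)
    (k : ℕ) : connectedComponentIn (L.lev (k + 1)) z ⊆ L.I1 j :=
  (connectedComponentIn_mono z fun _ hy => hy.1).trans
    (connectedComponentIn_iUnion_of_isOpen L.isOpen_I1 L.isPreconnected_I1 L.hdisj1 hz).subset

theorem isAffineBijOn_connectedComponentIn_lev_succ {x : ℝ} {k : ℕ} (hx : x ∈ L.lev (k + 1)) :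
    IsAffineBijOn L.σ (connectedComponentIn (L.lev (k + 1)) x)
      (connectedComponentIn (L.lev k) (L.σ x)) := by
  obtain ⟨j, hxj⟩ := mem_iUnion.1 hx.1
  obtain ⟨i, a, b, ha, hσ, himage⟩ := L.haff j
  have hC := L.connectedComponentIn_lev_succ_subset_I1 hxj k
  have hD := L.connectedComponentIn_lev_subset_I (himage ▸ mem_image_of_mem L.σ hxj) k
  have hσx' := hσ x hxj
  refine ⟨a, b, ha, fun y hy => hσ y (hC hy), ?_⟩
  rw [image_congr fun y hy => hσ y (hC hy), hσx']
  refine image_connectedComponentIn_eq_of_rightInvOn (f := fun y => a * y + b)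
    (g := fun y => (y - b) / a) (by fun_prop) (by fun_prop) hx (fun y hy => ?_) (fun y hy => ?_)
    (by field_simp; ring) (fun y _ => by field_simp; ring)
  · beta_reduce
    rw [← hσ y (hC hy)]
    exact (connectedComponentIn_subset _ _ hy).2
  · rw [← hσx'] at hy
    obtain ⟨v, hv, rfl⟩ := himage.symm ▸ hD hy
    have hσv : (L.σ v - b) / a = v := by rw [hσ v hv]; field_simp; ring
    beta_reduce
    rw [hσv]
    exact ⟨mem_iUnion_of_mem j hv, connectedComponentIn_subset _ _ hy⟩

theorem isAffineBijOn_iterate_connectedComponentIn_lev {k t : ℕ} {x : ℝ}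
    (hx : x ∈ L.lev (k + t)) :
    IsAffineBijOn L.σ^[k] (connectedComponentIn (L.lev (k + t)) x)
      (connectedComponentIn (L.lev t) (L.σ^[k] x)) := by
  induction k generalizing x with
  | zero => simpa using isAffineBijOn_id _
  | succ k ih =>
    rw [Nat.add_right_comm] at hx ⊢
    exact (L.isAffineBijOn_connectedComponentIn_lev_succ hx).comp (ih hx.2)

theorem exists_not_I_subset_lev : ∃ N, ∀ i, ¬ L.I i ⊆ L.lev N := by
  obtain ⟨N, -, hmix⟩ := L.hmix
  refine ⟨N, fun i hsub => (hmix i).2 ?_⟩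
  change IsPreconnected (L.lev N ∩ L.I i)
  rw [inter_eq_right.2 hsub]
  exact L.isPreconnected_I i

theorem exists_diam_le_mul_diam_I {N : ℕ} (hN : ∀ i, ¬ L.I i ⊆ L.lev N) :
    ∃ Λ, 0 ≤ Λ ∧ Λ < 1 ∧ ∀ i s, s ⊆ L.I i → IsPreconnected s → s ⊆ L.lev N →
      diam s ≤ Λ * diam (L.I i) := by
  have hr : ∀ i, ∃ r < 1, ∀ s, s ⊆ L.I i → IsPreconnected s → s ⊆ L.lev N →
      diam s ≤ r * diam (L.I i) := by
    intro i
    obtain ⟨w, hwI, hwN⟩ := not_subset.1 (hN i)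
    obtain ⟨A, B, hAB, hI⟩ := L.hI i
    rw [hI] at hwI ⊢
    have hBA : 0 < B - A := sub_pos.2 hAB
    refine ⟨max (w - A) (B - w) / (B - A), ?_, fun s hsI hs hsN => ?_⟩
    · rw [div_lt_one hBA]
      exact max_lt (by linarith [hwI.2]) (by linarith [hwI.1])
    · rw [Real.diam_Ioo hAB.le, div_mul_cancel₀ _ hBA.ne']
      exact hs.diam_le_max_of_notMem hsI hwI fun hw => hwN (hsN hw)
  choose r hr1 hr using hr
  obtain ⟨Λ, hΛ0, hΛ1, hrΛ⟩ := exists_forall_le_of_forall_lt_one hr1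
  exact ⟨Λ, hΛ0, hΛ1, fun i s hsI hs hsN =>
    (hr i s hsI hs hsN).trans (mul_le_mul_of_nonneg_right (hrΛ i) diam_nonneg)⟩

section Contraction

variable {N : ℕ} {Λ : ℝ} (hΛ : ∀ i s, s ⊆ L.I i → IsPreconnected s → s ⊆ L.lev N →
  diam s ≤ Λ * diam (L.I i))
include hΛ

theorem diam_connectedComponentIn_lev_add_le {k : ℕ} {z : ℝ} (hz : z ∈ L.lev (k + N)) :
    diam (connectedComponentIn (L.lev (k + N)) z)
      ≤ Λ * diam (connectedComponentIn (L.lev k) z) := by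
  have hzk : z ∈ L.lev k := L.antitone_lev (k.le_add_right N) hz
  have hk : IsAffineBijOn L.σ^[k] (connectedComponentIn (L.lev k) z)
      (connectedComponentIn (L.lev 0) (L.σ^[k] z)) :=
    L.isAffineBijOn_iterate_connectedComponentIn_lev (t := 0) hzk
  obtain ⟨c, hc, hdiam⟩ := hk.exists_diam_image_eq
  obtain ⟨i, hi⟩ := mem_iUnion.1 (L.iterate_mem_lev (t := 0) hzk)
  have hsub : connectedComponentIn (L.lev (k + N)) z ⊆ connectedComponentIn (L.lev k) z :=
    connectedComponentIn_mono z (L.antitone_lev (k.le_add_right N))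
  refine le_of_mul_le_mul_left ?_ hc
  calc c * diam (connectedComponentIn (L.lev (k + N)) z)
      = diam (connectedComponentIn (L.lev N) (L.σ^[k] z)) := by
        rw [← hdiam _ hsub, (L.isAffineBijOn_iterate_connectedComponentIn_lev hz).image_eq]
    _ ≤ Λ * diam (L.I i) :=
        hΛ i _ (L.connectedComponentIn_lev_subset_I hi N) isPreconnected_connectedComponentIn
          (connectedComponentIn_subset _ _)
    _ = c * (Λ * diam (connectedComponentIn (L.lev k) z)) := by
        rw [← L.connectedComponentIn_lev_zero hi, ← hk.image_eq, hdiam _ subset_rfl]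
        ring

theorem diam_connectedComponentIn_lev_add_mul_le (hΛ0 : 0 ≤ Λ) {x : ℝ} (hx : x ∈ L.julia)
    (k t : ℕ) : diam (connectedComponentIn (L.lev (k + t * N)) x)
      ≤ Λ ^ t * diam (connectedComponentIn (L.lev k) x) := by
  induction t with
  | zero => simp
  | succ t ih =>
    calc diam (connectedComponentIn (L.lev (k + (t + 1) * N)) x)
        = diam (connectedComponentIn (L.lev (k + t * N + N)) x) := by
          rw [add_mul, one_mul, add_assoc]
      _ ≤ Λ * diam (connectedComponentIn (L.lev (k + t * N)) x) :=
          L.diam_connectedComponentIn_lev_add_le hΛ (L.mem_lev_of_mem_julia hx _)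
      _ ≤ Λ * (Λ ^ t * diam (connectedComponentIn (L.lev k) x)) := by gcongr
      _ = Λ ^ (t + 1) * diam (connectedComponentIn (L.lev k) x) := by ring

end Contraction

theorem iInter_connectedComponentIn_lev_eq_singleton {x : ℝ} (hx : x ∈ L.julia) :
    ⋂ k : ℕ, connectedComponentIn (L.lev (k + 1)) x = {x} := by
  obtain ⟨N, hN⟩ := L.exists_not_I_subset_lev
  obtain ⟨Λ, hΛ0, hΛ1, hΛ⟩ := L.exists_diam_le_mul_diam_I hN
  refine eq_singleton_iff_unique_mem.2 ⟨mem_iInter.2 fun k =>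
    mem_connectedComponentIn (L.mem_lev_of_mem_julia hx _), fun y hy => ?_⟩
  have hdist (t : ℕ) : dist y x ≤ Λ ^ t * diam (connectedComponentIn (L.lev 1) x) := by
    have hyt := mem_iInter.1 hy (t * N)
    rw [add_comm] at hyt
    refine (dist_le_diam_of_mem ((L.isBounded_lev _).subset (connectedComponentIn_subset _ _))
      hyt (mem_connectedComponentIn (L.mem_lev_of_mem_julia hx _))).trans ?_
    exact L.diam_connectedComponentIn_lev_add_mul_le hΛ hΛ0 hx 1 t
  have hlim : Tendsto (fun t : ℕ => Λ ^ t * diam (connectedComponentIn (L.lev 1) x)) atTop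
      (𝓝 0) := by
    simpa using (tendsto_pow_atTop_nhds_zero_of_lt_one hΛ0 hΛ1).mul_const
      (diam (connectedComponentIn (L.lev 1) x))
  exact dist_le_zero.1 (ge_of_tendsto' hlim hdist)

theorem exists_mem_I1_of_itinerary {z u : ℝ} (hz : z ∈ L.julia) (hu : u ∈ L.julia)
    (h : ∀ j j', z ∈ L.I1 j → u ∈ L.I1 j' → j = j') : ∃ j, z ∈ L.I1 j ∧ u ∈ L.I1 j := by
  obtain ⟨j, hzj⟩ := mem_iUnion.1 (L.mem_lev_of_mem_julia hz 1).1
  obtain ⟨j', huj⟩ := mem_iUnion.1 (L.mem_lev_of_mem_julia hu 1).1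
  exact ⟨j, hzj, h j j' hzj huj ▸ huj⟩

theorem mem_connectedComponentIn_lev_of_itinerary {z u : ℝ} (hz : z ∈ L.julia)
    (hu : u ∈ L.julia)
    (h : ∀ t (j j' : Fin m), L.σ^[t] z ∈ L.I1 j → L.σ^[t] u ∈ L.I1 j' → j = j') (k : ℕ) :
    u ∈ connectedComponentIn (L.lev k) z := by
  induction k generalizing z u with
  | zero =>
    obtain ⟨j, hzj, huj⟩ := L.exists_mem_I1_of_itinerary hz hu (h 0)
    obtain ⟨i, hi⟩ := L.hsub j
    rw [L.connectedComponentIn_lev_zero (hi hzj)]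
    exact hi huj
  | succ k ih =>
    obtain ⟨j, hzj, huj⟩ := L.exists_mem_I1_of_itinerary hz hu (h 0)
    have hσu := ih (L.σ_mem_julia hz) (L.σ_mem_julia hu) fun t => h (t + 1)
    rw [← (L.isAffineBijOn_connectedComponentIn_lev_succ (L.mem_lev_of_mem_julia hz _)).image_eq]
      at hσu
    obtain ⟨v, hv, hvu⟩ := hσu
    obtain ⟨i, hσ⟩ := L.isAffineBijOn_I1 j
    rwa [← hσ.injOn (L.connectedComponentIn_lev_succ_subset_I1 hzj k hv) huj hvu]

end LinearSystem

theorem linearSystem_itinerary_separates {n m : ℕ} (L : LinearSystem n m) :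
    (∀ x ∈ L.julia,
      (⋂ k : ℕ, connectedComponentIn (L.lev (k + 1)) x) = {x}) ∧
    (∀ x ∈ L.julia, ∀ y ∈ L.julia, x ≠ y →
      ∃ (k : ℕ) (j j' : Fin m), j ≠ j' ∧
        L.σ^[k] x ∈ L.I1 j ∧ L.σ^[k] y ∈ L.I1 j') := by
  refine ⟨fun x hx => L.iInter_connectedComponentIn_lev_eq_singleton hx, fun x hx y hy hxy => ?_⟩
  by_contra! h
  have hyx : y ∈ ⋂ k : ℕ, connectedComponentIn (L.lev (k + 1)) x :=
    mem_iInter.2 fun k => L.mem_connectedComponentIn_lev_of_itinerary hx hy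
      (fun t j j' hxj hyj => by_contra fun hne => h t j j' hne hxj hyj) (k + 1)
  rw [L.iInter_connectedComponentIn_lev_eq_singleton hx] at hyx
  exact hxy hyx.symm
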